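/- arXiv:1207.3622 — 3 statements merged into one kernel-verified Lean document; each statement's English description precedes it below -/
import Mathlib

section
/- Let G be a connected simple graph on a finite vertex type V with at least s vertices, whose diameter equals 3h + z where h, z ∈ ℕ, h ≥ 1, z ≤ 2, and let s ≥ 2. Suppose N : V → Finset V assigns to each vertex v a set N(v) of s closest vertices to v, let S ⊆ V satisfy S ∩ N(v) ≠ ∅ for every v ∈ V, and let w ∈ V maximize d_N(w) := max_{x∈N(w)} dist(w,x). Define Est to be the maximum of: (i) ecc(x) over all x ∈ S ∪ {w} ∪ N(w), and (ii) d_N(u) + d_N(v) over all pairs u, v ∈ V such that B(u, d_N(u)−1) and B(v, d_N(v)−1) are disjoint and no edge of G joins a vertex of B(u, d_N(u)−1) to a vertex of B(v, d_N(v)−1). Then 2h + z ≤ Est ≤ 3h + z. -/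
/-!
Balls `B(u, r)` and `B(v, t)` are disjoint and joined by no edge exactly when
`dist u v ≥ r + t + 2`, so every term of `Est` is at most the diameter `D`.

For the lower bound it suffices that `3 Est ≥ 2 D`, as `D = 3h + z` with `z ≤ 2`. Take `a, b`
with `dist a b = D` and suppose `3 Est < 2 D`. Every vertex of `S ∪ {w} ∪ N(w)` has
eccentricity at most `Est`, hence lies at distance at least `D - Est` from both `a` and `b`;
as `S` meets `N(a)` and `N(b)`, also `d_N(a), d_N(b) ≥ D - Est`. If `d_N(a) + d_N(b) ≤ D`
the pair `(a, b)` itself gives `Est ≥ 2 (D - Est)`. Otherwise `2 d_N(w) > D`, and the vertex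
`q` at distance `d_N(w) - 1` from `w` on a geodesic to `a` lies in `N(w)`, so
`ecc(w) ≥ dist w a = d_N(w) - 1 + dist q a ≥ d_N(w) - 1 + D - Est`, which contradicts
`3 Est < 2 D` once `D ≥ 3`.
-/

/-- The closed ball of radius `r` around `v` in the graph `G`. -/
def SimpleGraph.closedBallN {V : Type*} (G : SimpleGraph V) (v : V) (r : ℕ) : Set V :=
  {x | G.dist v x ≤ r}

/-- The eccentricity of a vertex `v`: the largest distance from `v` to a vertex of the graph. -/
noncomputable def SimpleGraph.ecc {V : Type*} [Fintype V] (G : SimpleGraph V) (v : V) : ℕ :=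
  Finset.univ.sup (G.dist v)

namespace SimpleGraph

variable {V : Type*}

def Separated (G : SimpleGraph V) (A B : Set V) : Prop :=
  Disjoint A B ∧ ∀ x ∈ A, ∀ y ∈ B, ¬ G.Adj x y

variable {G : SimpleGraph V}

lemma Connected.exists_dist_eq_of_le (hG : G.Connected) {u v : V} {k : ℕ}
    (hk : k ≤ G.dist u v) : ∃ x, G.dist u x = k ∧ G.dist x v = G.dist u v - k := by
  obtain ⟨p, hp⟩ := hG.exists_walk_length_eq_dist u v
  have hux := dist_le (p.take k)
  have hxv := dist_le (p.drop k)
  have htri : G.dist u v ≤ G.dist u (p.getVert k) + G.dist (p.getVert k) v := hG.dist_triangle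
  simp only [Walk.take_length, Walk.drop_length] at hux hxv
  exact ⟨p.getVert k, by omega, by omega⟩

lemma Connected.separated_closedBallN_iff (hG : G.Connected) {u v : V} {r t : ℕ} :
    G.Separated (G.closedBallN u r) (G.closedBallN v t) ↔ r + t + 2 ≤ G.dist u v := by
  constructor
  · rintro ⟨hdisj, hnadj⟩
    by_contra! hlt
    by_cases hur : G.dist u v ≤ r
    · exact Set.disjoint_left.mp hdisj (show v ∈ G.closedBallN u r from hur)
        (show G.dist v v ≤ t by simp)
    obtain ⟨x, hux, hxv⟩ := hG.exists_dist_eq_of_le (le_of_not_ge hur)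
    obtain ⟨y, hxy, hyv⟩ := hG.exists_dist_eq_of_le (u := x) (v := v) (k := 1) (by omega)
    refine hnadj x hux.le y ?_ (dist_eq_one_iff_adj.mp hxy)
    change G.dist v y ≤ t
    rw [dist_comm]
    omega
  · intro hfar
    refine ⟨Set.disjoint_left.mpr fun x (hux : G.dist u x ≤ r) (hvx : G.dist v x ≤ t) => ?_,
      fun x (hux : G.dist u x ≤ r) y (hvy : G.dist v y ≤ t) hxy => ?_⟩
    · have := hG.dist_triangle (u := u) (v := x) (w := v)
      rw [dist_comm (u := x)] at this
      omega
    · have := hG.dist_triangle (u := u) (v := x) (w := v)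
      have := hG.dist_triangle (u := x) (v := y) (w := v)
      rw [dist_comm (u := y), dist_eq_one_iff_adj.mpr hxy] at this
      omega

lemma mem_of_dist_lt_sup {N : Finset V} {v x : V}
    (hN : ∀ y ∈ N, ∀ z ∉ N, G.dist v y ≤ G.dist v z) (hx : G.dist v x < N.sup (G.dist v)) :
    x ∈ N := by
  obtain ⟨y, hy, hxy⟩ := Finset.lt_sup_iff.mp hx
  by_contra hxN
  exact absurd (hN y hy x hxN) (not_le.mpr hxy)

section Fintype

variable [Fintype V]

lemma dist_le_ecc (v x : V) : G.dist v x ≤ G.ecc v :=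
  Finset.le_sup (Finset.mem_univ x)

lemma Connected.ecc_le_diam (hG : G.Connected) (v : V) : G.ecc v ≤ G.diam :=
  have : Nonempty V := hG.nonempty
  Finset.sup_le fun _ _ => dist_le_diam (connected_iff_ediam_ne_top.mp hG)

lemma Connected.dist_sub_ecc_le (hG : G.Connected) (a b p : V) :
    G.dist a b - G.ecc p ≤ G.dist p a := by
  have := hG.dist_triangle (u := a) (v := p) (w := b)
  have := dist_le_ecc (G := G) p b
  have := dist_comm (G := G) (u := a) (v := p)
  omega

lemma Connected.two_mul_dist_le_three_mul (hG : G.Connected) {a b : V} (hab : 3 ≤ G.dist a b)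
    {N : V → Finset V} {dN : V → ℕ} (hdN_le : ∀ v, ∀ x ∈ N v, G.dist v x ≤ dN v)
    (hdN_lt : ∀ v x, G.dist v x < dN v → x ∈ N v)
    {S : Finset V} (hS : ∀ v, ∃ p ∈ S, p ∈ N v) {w : V} (hw : ∀ u, dN u ≤ dN w) {E : ℕ}
    (hS_ecc : ∀ p ∈ S, G.ecc p ≤ E) (hw_ecc : G.ecc w ≤ E) (hNw_ecc : ∀ p ∈ N w, G.ecc p ≤ E)
    (hpair : ∀ u v, G.Separated (G.closedBallN u (dN u - 1)) (G.closedBallN v (dN v - 1)) →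
      dN u + dN v ≤ E) :
    2 * G.dist a b ≤ 3 * E := by
  by_contra! hE
  have far_a : ∀ p, G.ecc p ≤ E → G.dist a b - E ≤ G.dist p a := fun p hp =>
    (Nat.sub_le_sub_left hp _).trans (hG.dist_sub_ecc_le a b p)
  have far_b : ∀ p, G.ecc p ≤ E → G.dist a b - E ≤ G.dist p b := fun p hp =>
    dist_comm (u := b) ▸ (Nat.sub_le_sub_left hp _).trans (hG.dist_sub_ecc_le b a p)
  have hdN_ge : ∀ v, (∀ p, G.ecc p ≤ E → G.dist a b - E ≤ G.dist p v) →
      G.dist a b - E ≤ dN v := fun v hfar => by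
    obtain ⟨p, hpS, hpN⟩ := hS v
    exact (hfar p (hS_ecc p hpS)).trans (dist_comm.le.trans (hdN_le v p hpN))
  have hdNa := hdN_ge a far_a
  have hdNb := hdN_ge b far_b
  by_cases hsep : dN a + dN b ≤ G.dist a b
  · have := hpair a b (hG.separated_closedBallN_iff.mpr (by omega))
    omega
  have hw2 : G.dist a b + 1 ≤ 2 * dN w := by have := hw a; have := hw b; omega
  have hwa : dN w - 1 ≤ G.dist w a := by
    by_contra! hlt
    have := far_a a (hNw_ecc a (hdN_lt w a (by omega)))
    simp only [dist_self] at this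
    omega
  obtain ⟨q, hwq, hqa⟩ := hG.exists_dist_eq_of_le hwa
  have := far_a q (hNw_ecc q (hdN_lt w q (by omega)))
  have := dist_le_ecc (G := G) w a
  omega

end Fintype

end SimpleGraph

open SimpleGraph

theorem approx_diam_estimate_general {V : Type*} [Fintype V] [DecidableEq V]
    (G : SimpleGraph V) (hG : G.Connected) (h z : ℕ)
    (hh : 1 ≤ h) (hz : z ≤ 2)
    (hdiam : G.diam = 3 * h + z)
    (N : V → Finset V)
    (hNclosest : ∀ v : V, ∀ x ∈ N v, ∀ y ∉ N v, G.dist v x ≤ G.dist v y)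
    (S : Finset V) (hS : ∀ v : V, ∃ p ∈ S, p ∈ N v)
    (dN : V → ℕ) (hdN : ∀ v : V, dN v = (N v).sup (G.dist v))
    (w : V) (hw : ∀ u : V, dN u ≤ dN w)
    (Est : ℕ)
    (hEst : Est = max ((S ∪ {w} ∪ N w).sup G.ecc)
        (sSup {d : ℕ | ∃ u v : V,
          (Disjoint (G.closedBallN u (dN u - 1)) (G.closedBallN v (dN v - 1)) ∧
            ∀ x ∈ G.closedBallN u (dN u - 1), ∀ y ∈ G.closedBallN v (dN v - 1), ¬ G.Adj x y) ∧
          d = dN u + dN v})) :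
    2 * h + z ≤ Est ∧ Est ≤ 3 * h + z := by
  have : Nonempty V := hG.nonempty
  have hdN_le : ∀ v, ∀ x ∈ N v, G.dist v x ≤ dN v := fun v x hx => hdN v ▸ Finset.le_sup hx
  have hdN_lt : ∀ v x, G.dist v x < dN v → x ∈ N v := fun v x hx =>
    mem_of_dist_lt_sup (hNclosest v) (hdN v ▸ hx)
  have hsep_le : ∀ u v, G.Separated (G.closedBallN u (dN u - 1)) (G.closedBallN v (dN v - 1)) →
      dN u + dN v ≤ G.diam := fun u v huv => by
    have := hG.separated_closedBallN_iff.mp huv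
    have := dist_le_diam (connected_iff_ediam_ne_top.mp hG) (u := u) (v := v)
    omega
  have hecc : ∀ p ∈ S ∪ {w} ∪ N w, G.ecc p ≤ Est := fun p hp =>
    hEst ▸ (Finset.le_sup hp).trans (le_max_left _ _)
  have hpair : ∀ u v, G.Separated (G.closedBallN u (dN u - 1)) (G.closedBallN v (dN v - 1)) →
      dN u + dN v ≤ Est := fun u v huv => hEst ▸ le_max_of_le_right
    (le_csSup ⟨G.diam, fun _ ⟨u, v, huv, hd⟩ => hd ▸ hsep_le u v huv⟩ ⟨u, v, huv, rfl⟩)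
  obtain ⟨a, b, hab⟩ := G.exists_dist_eq_diam
  have := hG.two_mul_dist_le_three_mul (a := a) (b := b) (by omega) hdN_le hdN_lt hS hw
    (fun p hp => hecc p (by simp [hp])) (hecc w (by simp)) (fun p hp => hecc p (by simp [hp])) hpair
  refine ⟨by omega, hEst ▸ hdiam ▸ max_le (Finset.sup_le fun x _ => hG.ecc_le_diam x) ?_⟩
  exact csSup_le' fun _ ⟨u, v, huv, hd⟩ => hd ▸ hsep_le u v huv

/-- Correctness of the algorithm Approx-Diam (Lemmas 5.1 and 5.2): for a connected graph of
diameter `3h + z` with `h ≥ 1`, `z ≤ 2`, with `N v` a set of `s` closest vertices to `v`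
(`2 ≤ s ≤ |V|`), a hitting set `S`, and `w` maximizing `d_N`, the estimate
`Est = max( max_{x ∈ S ∪ {w} ∪ N w} ecc(x) ,
            sup { d_N(u) + d_N(v) : B(u, d_N(u)-1) and B(v, d_N(v)-1) are disjoint and
                  joined by no edge } )`
satisfies `2h + z ≤ Est ≤ 3h + z`. -/
theorem approx_diam_estimate {V : Type*} [Fintype V] [DecidableEq V] [Nonempty V]
    (G : SimpleGraph V) (hG : G.Connected) (h z s : ℕ)
    (hh : 1 ≤ h) (hz : z ≤ 2) (hs : 2 ≤ s) (hsV : s ≤ Fintype.card V)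
    (hdiam : G.diam = 3 * h + z)
    (N : V → Finset V) (hNcard : ∀ v : V, (N v).card = s)
    (hNclosest : ∀ v : V, ∀ x ∈ N v, ∀ y ∉ N v, G.dist v x ≤ G.dist v y)
    (S : Finset V) (hS : ∀ v : V, ∃ p ∈ S, p ∈ N v)
    (dN : V → ℕ) (hdN : ∀ v : V, dN v = (N v).sup (G.dist v))
    (w : V) (hw : ∀ u : V, dN u ≤ dN w)
    (Est : ℕ)
    (hEst : Est = max ((S ∪ {w} ∪ N w).sup G.ecc)
        (sSup {d : ℕ | ∃ u v : V,
          (Disjoint (G.closedBallN u (dN u - 1)) (G.closedBallN v (dN v - 1)) ∧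
            ∀ x ∈ G.closedBallN u (dN u - 1), ∀ y ∈ G.closedBallN v (dN v - 1), ¬ G.Adj x y) ∧
          d = dN u + dN v})) :
    2 * h + z ≤ Est ∧ Est ≤ 3 * h + z :=
  approx_diam_estimate_general G hG h z hh hz hdiam N hNclosest S hS dN hdN w hw Est hEst
end

section
/- Let G be a simple graph on a finite nonempty vertex type V and let k ≥ 1. Suppose no k-element subset of V is a dominating set of G, and moreover G has no dominating set of size at most 2k. Then in the reduction graph G', every two vertices are at distance at most 2. -/
/-- `S` dominates `v` in `G` if `v ∈ S` or some element of `S` is adjacent to `v`. -/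
def SimpleGraph.DominatesVert {V : Type*} (G : SimpleGraph V) (S : Finset V) (v : V) : Prop :=
  v ∈ S ∨ ∃ u ∈ S, G.Adj u v

/-- `S` is a dominating set of `G` if it dominates every vertex. -/
def SimpleGraph.IsDominatingSet {V : Type*} (G : SimpleGraph V) (S : Finset V) : Prop :=
  ∀ v : V, G.DominatesVert S v

/-- The dominating-set-to-diameter reduction graph `G'`: its vertices are the `k`-element
subsets of `V` together with the elements of `V`; the elements of `V` form a clique; a
`k`-subset `S` is adjacent to a vertex `v ∈ V` iff `S` does not dominate `v`; two `k`-subsets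
are never adjacent. -/
def SimpleGraph.reductionGraph {V : Type*} (G : SimpleGraph V) (k : ℕ) :
    SimpleGraph ({A : Finset V // A.card = k} ⊕ V) where
  Adj x y :=
    match x, y with
    | Sum.inl _, Sum.inl _ => False
    | Sum.inl S, Sum.inr v => ¬ G.DominatesVert S.1 v
    | Sum.inr v, Sum.inl S => ¬ G.DominatesVert S.1 v
    | Sum.inr u, Sum.inr v => u ≠ v
  symm := by
    constructor
    rintro (S | u) (T | v) hadj
    · exact hadj
    · exact hadj
    · exact hadj
    · exact hadj.symm
  loopless := by
    constructor
    rintro (S | u) hadj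
    · exact hadj
    · exact hadj rfl

/-! Two `k`-subsets `S`, `T` have a common neighbour in `G'`, namely any vertex not dominated by
`S ∪ T`, which exists because `|S ∪ T| ≤ 2k`. A `k`-subset `S` reaches any `v ∈ V` through a vertex
not dominated by `S` and the clique on `V`. -/

namespace SimpleGraph

variable {V : Type*} {G : SimpleGraph V}

theorem DominatesVert.mono {S T : Finset V} {v : V} (hST : S ⊆ T) (h : G.DominatesVert S v) :
    G.DominatesVert T v :=
  h.imp (fun hv => hST hv) fun ⟨u, hu, huv⟩ => ⟨u, hST hu, huv⟩

theorem isDominatingSet_empty_iff : G.IsDominatingSet ∅ ↔ IsEmpty V := by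
  simp [IsDominatingSet, DominatesVert, isEmpty_iff]

section reductionGraph

variable {k : ℕ}

theorem reductionGraph_adj_inl_inr {S : {A : Finset V // A.card = k}} {v : V} :
    (G.reductionGraph k).Adj (.inl S) (.inr v) ↔ ¬ G.DominatesVert S.1 v :=
  Iff.rfl

theorem reductionGraph_adj_inr_inr {u v : V} :
    (G.reductionGraph k).Adj (.inr u) (.inr v) ↔ u ≠ v :=
  Iff.rfl

theorem reductionGraph_edist_inr_inr_le_one (u v : V) :
    (G.reductionGraph k).edist (.inr u) (.inr v) ≤ 1 :=
  edist_le_one_iff_adj_or_eq.mpr <|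
    (ne_or_eq u v).imp reductionGraph_adj_inr_inr.mpr (congrArg _)

theorem reductionGraph_edist_inl_inr_le_two {S : {A : Finset V // A.card = k}}
    (hS : ¬ G.IsDominatingSet S.1) (v : V) :
    (G.reductionGraph k).edist (.inl S) (.inr v) ≤ 2 := by
  obtain ⟨w, hw⟩ := not_forall.mp hS
  calc (G.reductionGraph k).edist (.inl S) (.inr v)
      ≤ (G.reductionGraph k).edist (.inl S) (.inr w)
        + (G.reductionGraph k).edist (.inr w) (.inr v) := SimpleGraph.edist_triangle
    _ ≤ 1 + 1 := add_le_add (edist_eq_one_iff_adj.mpr (reductionGraph_adj_inl_inr.mpr hw)).le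
        (reductionGraph_edist_inr_inr_le_one w v)

theorem reductionGraph_edist_inl_inl_le_two [DecidableEq V] {S T : {A : Finset V // A.card = k}}
    (hST : ¬ G.IsDominatingSet (S.1 ∪ T.1)) :
    (G.reductionGraph k).edist (.inl S) (.inl T) ≤ 2 := by
  obtain ⟨w, hw⟩ := not_forall.mp hST
  have hS : (G.reductionGraph k).Adj (.inl S) (.inr w) :=
    reductionGraph_adj_inl_inr.mpr fun h => hw (h.mono Finset.subset_union_left)
  have hT : (G.reductionGraph k).Adj (.inr w) (.inl T) :=
    (reductionGraph_adj_inl_inr.mpr fun h => hw (h.mono Finset.subset_union_right)).symm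
  calc (G.reductionGraph k).edist (.inl S) (.inl T)
      ≤ (G.reductionGraph k).edist (.inl S) (.inr w)
        + (G.reductionGraph k).edist (.inr w) (.inl T) := SimpleGraph.edist_triangle
    _ = 1 + 1 := by rw [edist_eq_one_iff_adj.mpr hS, edist_eq_one_iff_adj.mpr hT]

theorem reductionGraph_ediam_le_two
    (h : ∀ A : Finset V, A.card ≤ 2 * k → ¬ G.IsDominatingSet A) :
    (G.reductionGraph k).ediam ≤ 2 := by
  classical
  have hS : ∀ S : {A : Finset V // A.card = k}, ¬ G.IsDominatingSet S.1 :=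
    fun S => h S.1 (by omega)
  refine ediam_le_of_edist_le ?_
  rintro (S | u) (T | v)
  · refine reductionGraph_edist_inl_inl_le_two (h _ ?_)
    calc (S.1 ∪ T.1).card ≤ S.1.card + T.1.card := Finset.card_union_le _ _
      _ = 2 * k := by omega
  · exact reductionGraph_edist_inl_inr_le_two (hS S) v
  · exact edist_comm.trans_le (reductionGraph_edist_inl_inr_le_two (hS T) u)
  · exact (reductionGraph_edist_inr_inr_le_one u v).trans (by norm_num)

end reductionGraph

end SimpleGraph

theorem reduction_dist_le_two_general {V : Type*}
    (G : SimpleGraph V) (k : ℕ)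
    (hno2k : ∀ A : Finset V, A.card ≤ 2 * k → ¬ G.IsDominatingSet A) :
    (G.reductionGraph k).Connected ∧
      ∀ x y : {A : Finset V // A.card = k} ⊕ V, (G.reductionGraph k).dist x y ≤ 2 := by
  have : Nonempty V :=
    not_isEmpty_iff.mp fun hV => hno2k ∅ (by simp) (G.isDominatingSet_empty_iff.mpr hV)
  have hdiam := G.reductionGraph_ediam_le_two hno2k
  have hconn : (G.reductionGraph k).Connected :=
    SimpleGraph.connected_of_ediam_ne_top (ne_top_of_le_ne_top (by decide) hdiam)
  refine ⟨hconn, fun x y => ?_⟩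
  have hxy := (SimpleGraph.edist_le_ediam (u := x) (v := y)).trans hdiam
  rw [← (hconn.preconnected x y).coe_dist_eq_edist] at hxy
  exact_mod_cast hxy

/-- If no `k`-element subset of `V` is a dominating set of `G`, and moreover `G` has no
dominating set of size at most `2k`, then any two vertices of the reduction graph `G'` are at
distance at most `2` (in particular `G'` is connected). -/
theorem reduction_dist_le_two {V : Type*} [Fintype V] [DecidableEq V] [Nonempty V]
    (G : SimpleGraph V) (k : ℕ) (hk : 1 ≤ k)
    (hno : ∀ A : Finset V, A.card = k → ¬ G.IsDominatingSet A)
    (hno2k : ∀ A : Finset V, A.card ≤ 2 * k → ¬ G.IsDominatingSet A) :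
    (G.reductionGraph k).Connected ∧
      ∀ x y : {A : Finset V // A.card = k} ⊕ V, (G.reductionGraph k).dist x y ≤ 2 :=
  reduction_dist_le_two_general G k hno2k
end

section
/- Let G be a simple graph on a finite vertex type V, let k ≥ 1, and suppose no k-element subset of V is a dominating set of G. If S and T are k-element subsets of V such that S ∪ T is a dominating set of G, then the distance between S and T in the reduction graph G' is at least 3 (in particular S ≠ T and they have no common neighbor in G'). -/
/-!
Every vertex of `G` is dominated by `S` or by `T`, so in `G'` it is not adjacent to both, and two
`k`-subsets are never adjacent: `S` and `T` have no common neighbour. Being non-dominating, each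
of them has a neighbour in the clique `V`, so they are connected; and `S ≠ T`, since `S ∪ S = S`
does not dominate. Hence they are at distance at least `3`.
-/

namespace SimpleGraph

variable {V : Type*}

lemma Reachable.three_le_dist {G : SimpleGraph V} {u v : V} (h : G.Reachable u v) (hne : u ≠ v)
    (hadj : ¬G.Adj u v) (hcommon : G.commonNeighbors u v = ∅) : 3 ≤ G.dist u v := by
  have h2 := two_lt_edist_iff.mpr ⟨hne, hadj, hcommon⟩
  rw [← h.coe_dist_eq_edist] at h2
  exact_mod_cast h2

variable (G : SimpleGraph V) {k : ℕ}

lemma dominatesVert_union [DecidableEq V] {S T : Finset V} {v : V} :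
    G.DominatesVert (S ∪ T) v ↔ G.DominatesVert S v ∨ G.DominatesVert T v := by
  simp only [DominatesVert, Finset.mem_union, or_and_right, exists_or]
  exact or_or_or_comm

lemma reductionGraph_not_adj_inl_inl (S T : {A : Finset V // A.card = k}) :
    ¬(G.reductionGraph k).Adj (.inl S) (.inl T) :=
  id

lemma reductionGraph_reachable_inr_inr (u v : V) :
    (G.reductionGraph k).Reachable (.inr u) (.inr v) := by
  obtain rfl | huv := eq_or_ne u v
  · rfl
  · exact Adj.reachable huv

lemma reductionGraph_reachable_inl_inl (S T : {A : Finset V // A.card = k})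
    (hS : ¬G.IsDominatingSet S.1) (hT : ¬G.IsDominatingSet T.1) :
    (G.reductionGraph k).Reachable (.inl S) (.inl T) := by
  obtain ⟨v, hv⟩ := not_forall.mp hS
  obtain ⟨w, hw⟩ := not_forall.mp hT
  have hSv : (G.reductionGraph k).Adj (.inl S) (.inr v) := hv
  have hTw : (G.reductionGraph k).Adj (.inl T) (.inr w) := hw
  exact hSv.reachable.trans ((G.reductionGraph_reachable_inr_inr v w).trans hTw.reachable.symm)

lemma reductionGraph_commonNeighbors_inl_inl_eq_empty [DecidableEq V]
    (S T : {A : Finset V // A.card = k}) (h : G.IsDominatingSet (S.1 ∪ T.1)) :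
    (G.reductionGraph k).commonNeighbors (.inl S) (.inl T) = ∅ := by
  refine Set.eq_empty_iff_forall_notMem.mpr ?_
  rintro (A | v) ⟨hSA, hTA⟩
  · exact G.reductionGraph_not_adj_inl_inl S A hSA
  · exact ((G.dominatesVert_union).mp (h v)).elim hSA hTA

end SimpleGraph

theorem reduction_dist_ge_three_of_union_dominating_general {V : Type*} [DecidableEq V]
    (G : SimpleGraph V) (k : ℕ)
    (hno : ∀ A : Finset V, A.card = k → ¬ G.IsDominatingSet A)
    (S T : Finset V) (hS : S.card = k) (hT : T.card = k)
    (hdom : G.IsDominatingSet (S ∪ T)) :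
    3 ≤ (G.reductionGraph k).dist (Sum.inl ⟨S, hS⟩) (Sum.inl ⟨T, hT⟩) ∧
      S ≠ T ∧
      ¬ ∃ x : {A : Finset V // A.card = k} ⊕ V,
          (G.reductionGraph k).Adj (Sum.inl ⟨S, hS⟩) x ∧
          (G.reductionGraph k).Adj x (Sum.inl ⟨T, hT⟩) := by
  have hST : S ≠ T := by
    rintro rfl
    exact hno S hS (by rwa [Finset.union_self] at hdom)
  have hcommon := G.reductionGraph_commonNeighbors_inl_inl_eq_empty ⟨S, hS⟩ ⟨T, hT⟩ hdom
  have hreach := G.reductionGraph_reachable_inl_inl ⟨S, hS⟩ ⟨T, hT⟩ (hno S hS) (hno T hT)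
  refine ⟨hreach.three_le_dist ?_ (G.reductionGraph_not_adj_inl_inl _ _) hcommon, hST, ?_⟩
  · simpa using hST
  · rintro ⟨x, hSx, hxT⟩
    exact Set.eq_empty_iff_forall_notMem.mp hcommon x ⟨hSx, hxT.symm⟩

/-- If no `k`-element subset of `V` is a dominating set of `G`, and `S`, `T` are `k`-element
subsets whose union is a dominating set of `G`, then the distance between `S` and `T` in the
reduction graph `G'` is at least `3`; in particular `S ≠ T` and `S`, `T` have no common
neighbor in `G'`. -/
theorem reduction_dist_ge_three_of_union_dominating {V : Type*} [Fintype V] [DecidableEq V]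
    (G : SimpleGraph V) (k : ℕ) (hk : 1 ≤ k)
    (hno : ∀ A : Finset V, A.card = k → ¬ G.IsDominatingSet A)
    (S T : Finset V) (hS : S.card = k) (hT : T.card = k)
    (hdom : G.IsDominatingSet (S ∪ T)) :
    3 ≤ (G.reductionGraph k).dist (Sum.inl ⟨S, hS⟩) (Sum.inl ⟨T, hT⟩) ∧
      S ≠ T ∧
      ¬ ∃ x : {A : Finset V // A.card = k} ⊕ V,
          (G.reductionGraph k).Adj (Sum.inl ⟨S, hS⟩) x ∧
          (G.reductionGraph k).Adj x (Sum.inl ⟨T, hT⟩) :=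
  reduction_dist_ge_three_of_union_dominating_general G k hno S T hS hT hdom
end
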